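/- Let u, w be any two elements of G(m, p, n). Then codimfix(u) + codimfix(u⁻¹w) ≥ n + c(w) − 2·|Π_u(w)| + #{parts of Π_u(w) of nonzero total weight}. -/

import Mathlib

open Equiv Finset
@[ext]
structure GW (m n : ℕ) where
  perm : Equiv.Perm (Fin n)
  wt : Fin n → ZMod m
namespace GW
variable {m n : ℕ}
instance : Mul (GW m n) :=
  ⟨fun x y => ⟨x.perm * y.perm, fun i => x.wt i + y.wt (x.perm⁻¹ i)⟩⟩
instance : One (GW m n) := ⟨⟨1, 0⟩⟩
instance : Inv (GW m n) := ⟨fun x => ⟨x.perm⁻¹, fun i => -x.wt (x.perm i)⟩⟩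
@[simp] theorem mul_perm (x y : GW m n) : (x * y).perm = x.perm * y.perm := rfl
@[simp] theorem mul_wt (x y : GW m n) (i : Fin n) :
    (x * y).wt i = x.wt i + y.wt (x.perm⁻¹ i) := rfl
@[simp] theorem one_perm : (1 : GW m n).perm = 1 := rfl
@[simp] theorem one_wt (i : Fin n) : (1 : GW m n).wt i = 0 := rfl
@[simp] theorem inv_perm (x : GW m n) : (x⁻¹).perm = x.perm⁻¹ := rfl
@[simp] theorem inv_wt (x : GW m n) (i : Fin n) : (x⁻¹).wt i = -x.wt (x.perm i) := rfl
private theorem gw_mul_assoc (a b c : GW m n) : a * b * c = a * (b * c) := by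
  ext i
  · simp [mul_assoc]
  · simp [mul_inv_rev, add_assoc]
private theorem gw_one_mul (a : GW m n) : 1 * a = a := by ext i <;> simp
private theorem gw_mul_one (a : GW m n) : a * 1 = a := by ext i <;> simp
private theorem gw_inv_mul_cancel (a : GW m n) : a⁻¹ * a = 1 := by ext i <;> simp
instance : Group (GW m n) where
  mul := (· * ·)
  one := 1
  inv := Inv.inv
  mul_assoc := gw_mul_assoc
  one_mul := gw_one_mul
  mul_one := gw_mul_one
  inv_mul_cancel := gw_inv_mul_cancel
def cycleOf (w : GW m n) (i : Fin n) : Finset (Fin n) :=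
  Finset.univ.filter fun j => w.perm.SameCycle i j
def cycles (w : GW m n) : Finset (Finset (Fin n)) :=
  Finset.univ.image fun i => w.cycleOf i
def cycWt (w : GW m n) (C : Finset (Fin n)) : ZMod m := ∑ i ∈ C, w.wt i
def numCycles (w : GW m n) : ℕ := (cycles w).card
def c0 (w : GW m n) : ℕ := ((cycles w).filter fun C => cycWt w C = 0).card
def codimfix (w : GW m n) : ℕ := n - c0 w
def wtTot (w : GW m n) : ZMod m := ∑ i, w.wt i

-- NEW PIECES BELOW --

/-- The base relation on cycles of `w` induced by `u`: two cycles of `w` are related if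
some cycle of `u` meets both of them. -/
def piRelBase (u w : GW m n) (C₁ C₂ : Finset (Fin n)) : Prop :=
  C₁ ∈ cycles w ∧ C₂ ∈ cycles w ∧ ∃ D ∈ cycles u, (D ∩ C₁).Nonempty ∧ (D ∩ C₂).Nonempty

/-- The equivalence relation on the cycles of `w` generated by `piRelBase`. -/
def piRel (u w : GW m n) : Finset (Fin n) → Finset (Fin n) → Prop :=
  Relation.EqvGen (piRelBase u w)

open Classical in
/-- The part of the partition `Π_u(w)` containing the cycle `C` of `w`. -/
noncomputable def piPart (u w : GW m n) (C : Finset (Fin n)) : Finset (Finset (Fin n)) :=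
  (cycles w).filter fun C' => piRel u w C C'

/-- The set partition `Π_u(w)` of the cycles of `w`, as the set of its parts. -/
noncomputable def piParts (u w : GW m n) : Finset (Finset (Finset (Fin n))) :=
  (cycles w).image fun C => piPart u w C

/-- The weight of a collection `B` of cycles: the sum of the weights of its cycles. -/
def partWt (w : GW m n) (B : Finset (Finset (Fin n))) : ZMod m :=
  ∑ C ∈ B, cycWt w C

open Classical in
/-- The number of parts of `Π_u(w)` of nonzero total weight. -/
noncomputable def piPartsNonzeroWt (u w : GW m n) : ℕ :=
  ((piParts u w).filter fun B => partWt w B ≠ 0).card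

/-- The support of a collection of cycles: the union of the cycles' underlying sets. -/
def supp (B : Finset (Finset (Fin n))) : Finset (Fin n) := B.sup id

/-- Restriction of a permutation to an invariant set `A` (junk value `1` if `A` is
not invariant): it agrees with `σ` on `A` and is the identity off `A`. -/
noncomputable def restrictPerm (σ : Equiv.Perm (Fin n)) (A : Finset (Fin n)) :
    Equiv.Perm (Fin n) :=
  if h : ∀ i, σ i ∈ A ↔ i ∈ A then
    { toFun := fun i => if i ∈ A then σ i else i
      invFun := fun i => if i ∈ A then σ.symm i else i
      left_inv := by
        intro i
        by_cases hi : i ∈ A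
        · simp [hi, (h i).mpr hi]
        · simp [hi]
      right_inv := by
        intro j
        by_cases hj : j ∈ A
        · have hs : σ.symm j ∈ A := by
            have h2 := h (σ.symm j)
            rw [Equiv.apply_symm_apply] at h2
            exact h2.mp hj
          simp [hj, hs]
        · simp [hj] }
  else 1


/-- The restriction `x|_A` of `x` to a subset `A` of `{1,…,n}` (stabilized by `x`):
it agrees with `x` on `A` and acts as the identity, with weight `0`, off `A`. -/
noncomputable def restrict (x : GW m n) (A : Finset (Fin n)) : GW m n :=
  ⟨restrictPerm x.perm A, fun i => if i ∈ A then x.wt i else 0⟩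

/-- The cycles of `x` contained in `A`; for `x = y|_A` this gives the cycles of the
restriction of `y` to `A`, viewed as an element of `G(m,1,#A)`. -/
def cyclesIn (x : GW m n) (A : Finset (Fin n)) : Finset (Finset (Fin n)) :=
  (cycles x).filter fun C => C ⊆ A

/-- The monomial matrix representing `w`: the nonzero entry in column `j` sits in row
`w.perm j` and equals `ζ^(a_(w.perm j))`, where `ζ = exp(2πi/m)`. -/
noncomputable def toMatrix (w : GW m n) : Matrix (Fin n) (Fin n) ℂ :=
  Matrix.of fun i j =>
    if w.perm j = i then Complex.exp (2 * Real.pi * Complex.I * ((w.wt i).val : ℂ) / (m : ℂ))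
    else 0

/-- `S` (a set of cycles of `w`) can be partitioned into singletons whose weight is
`0 (mod p)` and pairs of cycles whose weights sum to `0` in `ℤ/mℤ`; encoded by an
involution pairing up the cycles. -/
def PairedUp (p : ℕ) (hpm : p ∣ m) (w : GW m n) (S : Finset (Finset (Fin n))) : Prop :=
  ∃ π : {C // C ∈ S} → {C // C ∈ S}, Function.Involutive π ∧
    (∀ C, π C = C → ZMod.castHom hpm (ZMod p) (cycWt w C.1) = 0) ∧
    (∀ C, π C ≠ C → cycWt w C.1 + cycWt w (π C).1 = 0)

/-- Membership in `G(m,p,n)`: the total weight is `0 (mod p)`. -/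
def Gmem (p : ℕ) (hpm : p ∣ m) (w : GW m n) : Prop :=
  ZMod.castHom hpm (ZMod p) (wtTot w) = 0

/-- A reflection of `G(m,p,n)`: an element of the group whose fixed space has codimension 1. -/
def IsRefl (p : ℕ) (hpm : p ∣ m) (t : GW m n) : Prop :=
  Gmem p hpm t ∧ codimfix t = 1

/-- The reflection length of `w` with respect to the reflections of `G(m,p,n)`. -/
noncomputable def lR (p : ℕ) (hpm : p ∣ m) (w : GW m n) : ℕ :=
  sInf {k | ∃ l : List (GW m n), (∀ t ∈ l, IsRefl p hpm t) ∧ l.length = k ∧ l.prod = w}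

/-- The order `≤_f` determined by a subadditive function `f`. -/
def leF (f : GW m n → ℕ) (x y : GW m n) : Prop := f x + f (x⁻¹ * y) = f y

/-- The interval `[id, w]_f` inside the poset `(G(m,p,n), ≤_f)`. -/
def interval (p : ℕ) (hpm : p ∣ m) (f : GW m n → ℕ) (w : GW m n) : Set (GW m n) :=
  {u | Gmem p hpm u ∧ leF f u w}

/-- A vector `v ∈ ℂⁿ` is regular for `G(m,p,n)` if it is fixed by no reflection. -/
def IsRegularVec (p : ℕ) (hpm : p ∣ m) (v : Fin n → ℂ) : Prop :=
  ∀ t : GW m n, IsRefl p hpm t → (toMatrix t).mulVec v ≠ v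

/-- An element `w ∈ G(m,p,n)` is regular if it has an eigenvector that is a regular vector. -/
def IsRegularElt (p : ℕ) (hpm : p ∣ m) (w : GW m n) : Prop :=
  ∃ v : Fin n → ℂ, v ≠ 0 ∧ (∃ c : ℂ, (toMatrix w).mulVec v = c • v) ∧ IsRegularVec p hpm v

end GW

/-!
Write `σ` and `τ` for the permutations underlying `u` and `u⁻¹ * w`, so that `σ * τ` underlies
`w`. The parts of `Π_u(w)` correspond to the orbits of `⟨σ, σ * τ⟩ = ⟨σ, τ⟩`, and any two
permutations of an `n`-set satisfy `c(σ) + c(τ) + c(σ * τ) ≤ n + 2 · #orbits` (the genus of the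
hypermap they define is nonnegative). The support of a part is invariant under `σ` and `τ`, and
the weight of `w` on it is the weight of `u` plus that of `u⁻¹ * w`, so every part of nonzero
weight contains a cycle of nonzero weight of `u` or of `u⁻¹ * w`; as the parts are disjoint,
there are at most as many such parts as such cycles. Since
`codimfix x = n - c(x) + #{cycles of x of nonzero weight}`, the two inequalities add up to the
claim.
-/

namespace Setoid

variable {α : Type*}

def glue (s : Setoid α) (a b : α) : Setoid α :=
  Relation.EqvGen.setoid fun x y => s x y ∨ x = a ∧ y = b

variable {s t : Setoid α} {a b : α}

theorem le_glue : s ≤ s.glue a b := fun _ _ h => Relation.EqvGen.rel _ _ (Or.inl h)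

theorem glue_rel : s.glue a b a b := Relation.EqvGen.rel _ _ (Or.inr ⟨rfl, rfl⟩)

theorem glue_le (hst : s ≤ t) (hab : t a b) : s.glue a b ≤ t :=
  eqvGen_le fun _ _ h => Or.elim h (fun h => hst h) fun ⟨hx, hy⟩ => hx ▸ hy ▸ hab

theorem glue_mono (hst : s ≤ t) : s.glue a b ≤ t.glue a b :=
  glue_le (hst.trans le_glue) glue_rel

theorem glue_eq_self (hab : s a b) : s.glue a b = s :=
  le_antisymm (glue_le le_rfl hab) le_glue

theorem rel_swap_apply [DecidableEq α] {E : Setoid α} (h : E a b) (x : α) :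
    E x (swap a b x) := by
  rcases eq_or_ne x a with rfl | hxa
  · simpa using h
  rcases eq_or_ne x b with rfl | hxb
  · simpa using E.symm h
  rw [swap_apply_of_ne_of_ne hxa hxb]

theorem card_quotient_eq_card_image {β : Type*} [Fintype α] [DecidableEq β]
    {s : Setoid α} {f : α → β} (h : ker f = s) :
    Nat.card (Quotient s) = #(univ.image f) := by
  subst h
  rw [Nat.card_congr (quotientKerEquivRange f), Nat.card_coe_set_eq, ← Set.ncard_coe_finset,
    coe_image, coe_univ, Set.image_univ]

variable [Finite α]

theorem card_quotient_le_of_le (hst : s ≤ t) : Nat.card (Quotient t) ≤ Nat.card (Quotient s) :=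
  Nat.card_le_card_of_surjective (Quotient.map' id hst) fun q =>
    q.inductionOn fun x => ⟨⟦x⟧, rfl⟩

theorem card_quotient_glue_lt (hab : ¬s a b) :
    Nat.card (Quotient (s.glue a b)) < Nat.card (Quotient s) := by
  classical
  have := Fintype.ofFinite α
  simp only [Nat.card_eq_fintype_card]
  refine Fintype.card_lt_of_surjective_not_injective (Quotient.map' id le_glue)
    (fun q => q.inductionOn fun x => ⟨⟦x⟧, rfl⟩) fun hinj => hab ?_
  exact Quotient.exact (@hinj ⟦a⟧ ⟦b⟧ (Quotient.sound glue_rel))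

theorem card_quotient_le_card_quotient_glue_add_one :
    Nat.card (Quotient s) ≤ Nat.card (Quotient (s.glue a b)) + 1 := by
  classical
  let g : α → Quotient s := fun x => if s x b then ⟦a⟧ else ⟦x⟧
  have hker : s.glue a b ≤ ker g := by
    refine glue_le (fun x y hxy => ?_) ?_
    · simp only [ker_def, g, show s x b ↔ s y b from ⟨(s.trans (s.symm hxy) ·), (s.trans hxy ·)⟩]
      split_ifs
      exacts [rfl, Quotient.sound hxy]
    · simp [ker_def, g]
  have hcover : Set.univ ⊆ insert ⟦b⟧ (Set.range (Quotient.lift g hker)) := by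
    rintro ⟨x⟩ -
    by_cases hx : s x b
    · exact Or.inl (Quotient.sound hx)
    · exact Or.inr ⟨⟦x⟧, if_neg hx⟩
  calc Nat.card (Quotient s) = (Set.univ : Set (Quotient s)).ncard := Set.ncard_univ _ |>.symm
    _ ≤ (Set.range (Quotient.lift g hker)).ncard + 1 :=
      (Set.ncard_le_ncard hcover).trans (Set.ncard_insert_le _ _)
    _ ≤ Nat.card (Quotient (s.glue a b)) + 1 := by
      rw [← Nat.card_coe_set_eq]; exact Nat.add_le_add_right (Finite.card_range_le _) 1

end Setoid

namespace Equiv.Perm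

variable {α : Type*}

theorem sameCycle_setoid_le {σ : Perm α} {E : Setoid α} (h : ∀ x, E x (σ x)) :
    SameCycle.setoid σ ≤ E := by
  rintro x _ ⟨i, rfl⟩
  induction i using Int.induction_on with
  | zero => exact E.refl' x
  | succ i ih =>
    rw [add_comm, zpow_one_add, mul_apply]
    exact E.trans' ih (h _)
  | pred i ih =>
    have hstep : σ ((σ ^ (-(i : ℤ) - 1)) x) = (σ ^ (-(i : ℤ))) x := by
      rw [← mul_apply, ← zpow_one_add, add_sub_cancel]
    exact E.trans' ih (E.symm' (hstep ▸ h _))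

theorem sameCycle_setoid_one : SameCycle.setoid (1 : Perm α) = ⊥ :=
  Setoid.ext fun _ _ => sameCycle_one

theorem sameCycle_setoid_inv (σ : Perm α) : SameCycle.setoid σ⁻¹ = SameCycle.setoid σ :=
  Setoid.ext fun _ _ => sameCycle_inv

abbrev orbitSetoid (σ τ : Perm α) : Setoid α := SameCycle.setoid σ ⊔ SameCycle.setoid τ

theorem sameCycle_setoid_mul_le_orbitSetoid (σ τ : Perm α) :
    SameCycle.setoid (σ * τ) ≤ orbitSetoid σ τ :=
  sameCycle_setoid_le fun x => Setoid.trans' _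
    ((le_sup_right : SameCycle.setoid τ ≤ _) (SameCycle.refl τ x).apply_right)
    ((le_sup_left : SameCycle.setoid σ ≤ _) (SameCycle.refl σ (τ x)).apply_right)

theorem orbitSetoid_inv_mul (σ τ : Perm α) : orbitSetoid σ (σ⁻¹ * τ) = orbitSetoid σ τ := by
  apply le_antisymm
  · refine sup_le le_sup_left ((sameCycle_setoid_mul_le_orbitSetoid _ _).trans ?_)
    rw [orbitSetoid, sameCycle_setoid_inv]
  · refine sup_le le_sup_left ?_
    simpa using sameCycle_setoid_mul_le_orbitSetoid σ (σ⁻¹ * τ)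

noncomputable def cycleCount (σ : Perm α) : ℕ := Nat.card (Quotient (SameCycle.setoid σ))

noncomputable def orbitCount (σ τ : Perm α) : ℕ := Nat.card (Quotient (orbitSetoid σ τ))

theorem cycleCount_one : cycleCount (1 : Perm α) = Nat.card α := by
  rw [cycleCount, sameCycle_setoid_one]
  exact Nat.card_congr Setoid.quotientBotEquiv

theorem orbitCount_one_left (τ : Perm α) : orbitCount 1 τ = cycleCount τ := by
  rw [orbitCount, orbitSetoid, sameCycle_setoid_one, bot_sup_eq, cycleCount]

theorem orbitCount_inv_mul (σ τ : Perm α) : orbitCount σ (σ⁻¹ * τ) = orbitCount σ τ := by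
  rw [orbitCount, orbitSetoid_inv_mul, orbitCount]

variable [DecidableEq α] {a b : α}

theorem sameCycle_setoid_le_glue_swap_mul (σ : Perm α) (a b : α) :
    SameCycle.setoid σ ≤ (SameCycle.setoid (swap a b * σ)).glue a b :=
  sameCycle_setoid_le fun x => by
    have hx : σ x = swap a b ((swap a b * σ) x) := by simp
    rw [hx]
    exact Setoid.trans' _ (Setoid.le_glue (SameCycle.refl (swap a b * σ) x).apply_right)
      (Setoid.rel_swap_apply Setoid.glue_rel _)

/-- If `a` and `b` lie in different cycles of `σ`, the cycle of `b` under `swap a b * σ` follows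
the `σ`-cycle of `b` until it returns to `b`, where it is sent to `a` instead. -/
theorem sameCycle_swap_mul_of_not_sameCycle [Finite α] {σ : Perm α} (h : ¬σ.SameCycle a b) :
    (swap a b * σ).SameCycle a b := by
  set σ' := swap a b * σ
  by_contra h'
  have hσ : ∀ y, σ.SameCycle b y → σ'.SameCycle b y → σ'.SameCycle b (σ y) := by
    intro y hy hy'
    have hya : σ' y ≠ a := fun e => h' (e ▸ hy'.apply_right).symm
    have hyb : σ' y ≠ b := fun e => by
      have hσy : σ y = a := by simpa [σ'] using congrArg (swap a b) e
      exact h (hσy ▸ hy.apply_right).symm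
    have hσy : σ y = σ' y := calc
      σ y = swap a b (σ' y) := by simp [σ']
      _ = σ' y := swap_apply_of_ne_of_ne hya hyb
    exact hσy ▸ hy'.apply_right
  have hpow : ∀ k : ℕ, σ'.SameCycle b ((σ ^ k) b) := by
    intro k
    induction k with
    | zero => exact SameCycle.refl _ _
    | succ k ih =>
      rw [pow_succ', mul_apply]
      exact hσ _ (SameCycle.refl _ _ |> sameCycle_pow_right.2) ih
  obtain ⟨k, hk⟩ := (sameCycle_symm_apply_right.2 (SameCycle.refl σ b)).exists_nat_pow_eq
  have : σ' (σ.symm b) = a := by simp [σ']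
  exact h' (this ▸ (hk ▸ hpow k).apply_right).symm

theorem cycleCount_swap_mul_lt [Finite α] {σ : Perm α} (h : ¬σ.SameCycle a b) :
    cycleCount (swap a b * σ) < cycleCount σ := by
  have h' := sameCycle_swap_mul_of_not_sameCycle h
  have hle := sameCycle_setoid_le_glue_swap_mul σ a b
  rw [Setoid.glue_eq_self h'] at hle
  exact (Setoid.card_quotient_le_of_le (Setoid.glue_le hle h')).trans_lt
    (Setoid.card_quotient_glue_lt h)

theorem cycleCount_swap_mul_le [Finite α] (σ : Perm α) (a b : α) :
    cycleCount (swap a b * σ) ≤ cycleCount σ + 1 :=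
  Setoid.card_quotient_le_card_quotient_glue_add_one.trans
    (Nat.add_le_add_right (Setoid.card_quotient_le_of_le
      (sameCycle_setoid_le_glue_swap_mul σ a b)) 1)

/-- Induction on the support of `σ`: replacing `σ` by `swap a (σ a) * σ` raises its cycle count
by one, changes that of `σ * τ` by one, and splits at most one orbit in two; when it does split
one, `a` and `σ a` end up in different cycles of the new `σ * τ`, so that this count drops. -/
theorem cycleCount_add_cycleCount_add_cycleCount_mul_le [Fintype α] (σ τ : Perm α) :
    cycleCount σ + cycleCount τ + cycleCount (σ * τ) ≤ Nat.card α + 2 * orbitCount σ τ := by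
  induction hk : #σ.support using Nat.strong_induction_on generalizing σ with
  | _ k ih =>
  by_cases hσ : σ = 1
  · subst hσ
    rw [one_mul, cycleCount_one, orbitCount_one_left]
    omega
  obtain ⟨a, ha⟩ : ∃ a, σ a ≠ a := not_forall.1 fun h => hσ (Equiv.ext h)
  set b := σ a
  set σ' := swap a b * σ
  have hσσ' : σ = swap a b * σ' := by simp [σ', ← mul_assoc]
  have hind := ih _ (hk ▸ card_support_swap_mul ha) σ' rfl
  have hsplit : cycleCount σ < cycleCount σ' := by
    have hfix : σ' a = a := by simp [σ', b]
    have hnot : ¬σ'.SameCycle a b := fun h => ha (h.eq_of_left hfix).symm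
    simpa [← hσσ'] using cycleCount_swap_mul_lt hnot
  have hmul : σ * τ = swap a b * (σ' * τ) := by rw [hσσ', mul_assoc]
  set O' := orbitSetoid σ' τ
  have horb : orbitSetoid σ τ ≤ O'.glue a b :=
    sup_le ((sameCycle_setoid_le_glue_swap_mul σ a b).trans (Setoid.glue_mono le_sup_left))
      (le_sup_right.trans Setoid.le_glue)
  by_cases hab : O' a b
  · have horbit : orbitCount σ' τ ≤ orbitCount σ τ :=
      Setoid.card_quotient_le_of_le (horb.trans (Setoid.glue_eq_self hab).le)
    have hcyc : cycleCount (σ * τ) ≤ cycleCount (σ' * τ) + 1 := by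
      rw [hmul]
      exact cycleCount_swap_mul_le _ a b
    omega
  · have horbit : orbitCount σ' τ ≤ orbitCount σ τ + 1 :=
      Setoid.card_quotient_le_card_quotient_glue_add_one.trans
        (Nat.add_le_add_right (Setoid.card_quotient_le_of_le horb) 1)
    have hcyc : cycleCount (σ * τ) < cycleCount (σ' * τ) := by
      rw [hmul]
      exact cycleCount_swap_mul_lt fun h => hab (sameCycle_setoid_mul_le_orbitSetoid σ' τ h)
    omega

end Equiv.Perm

namespace GW

open Perm

variable {m n : ℕ}

theorem mem_cycleOf {w : GW m n} {i j : Fin n} : j ∈ cycleOf w i ↔ w.perm.SameCycle i j := by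
  simp [cycleOf]

theorem mem_cycleOf_self (w : GW m n) (i : Fin n) : i ∈ cycleOf w i :=
  mem_cycleOf.2 (SameCycle.refl _ _)

theorem cycleOf_mem_cycles (w : GW m n) (i : Fin n) : cycleOf w i ∈ cycles w :=
  mem_image_of_mem _ (mem_univ i)

theorem cycleOf_eq_cycleOf_iff {w : GW m n} {i j : Fin n} :
    cycleOf w i = cycleOf w j ↔ w.perm.SameCycle i j := by
  refine ⟨fun h => mem_cycleOf.1 (h ▸ mem_cycleOf_self w j), fun h => ?_⟩
  ext k
  simp only [mem_cycleOf]
  exact ⟨h.symm.trans, h.trans⟩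

theorem eq_cycleOf_of_mem {w : GW m n} {C : Finset (Fin n)} (hC : C ∈ cycles w) {i : Fin n}
    (hi : i ∈ C) : C = cycleOf w i := by
  obtain ⟨j, -, rfl⟩ := mem_image.1 hC
  exact cycleOf_eq_cycleOf_iff.2 (mem_cycleOf.1 hi)

theorem nonempty_of_mem_cycles {w : GW m n} {C : Finset (Fin n)} (hC : C ∈ cycles w) :
    C.Nonempty := by
  obtain ⟨i, -, rfl⟩ := mem_image.1 hC
  exact ⟨i, mem_cycleOf_self w i⟩

theorem pairwiseDisjoint_cycles (w : GW m n) :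
    (cycles w : Set (Finset (Fin n))).PairwiseDisjoint id :=
  fun _ hC _ hC' hne => disjoint_left.2 fun _ hi hi' =>
    hne ((eq_cycleOf_of_mem hC hi).trans (eq_cycleOf_of_mem hC' hi').symm)

theorem numCycles_eq_cycleCount (w : GW m n) : numCycles w = w.perm.cycleCount :=
  (Setoid.card_quotient_eq_card_image (Setoid.ext fun _ _ => cycleOf_eq_cycleOf_iff)).symm

theorem numCycles_le (w : GW m n) : numCycles w ≤ n :=
  card_image_le.trans_eq (card_fin n)

theorem c0_add_card_filter_cycWt_ne_zero (w : GW m n) :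
    c0 w + #{C ∈ cycles w | cycWt w C ≠ 0} = numCycles w :=
  card_filter_add_card_filter_not _

theorem sum_wt_mul (x y : GW m n) {A : Finset (Fin n)} (hA : ∀ i, x.perm i ∈ A ↔ i ∈ A) :
    ∑ i ∈ A, (x * y).wt i = ∑ i ∈ A, x.wt i + ∑ i ∈ A, y.wt i := by
  simp only [mul_wt, sum_add_distrib]
  congr 1
  exact sum_equiv x.perm⁻¹ (fun i => by simpa using hA (x.perm⁻¹ i)) fun _ _ => rfl

theorem exists_cycle_subset_cycWt_ne_zero (x : GW m n) {A : Finset (Fin n)}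
    (hA : ∀ i j, x.perm.SameCycle i j → i ∈ A → j ∈ A) (h : ∑ i ∈ A, x.wt i ≠ 0) :
    ∃ C ∈ cycles x, C ⊆ A ∧ cycWt x C ≠ 0 := by
  have hsum : ∑ C ∈ A.image (cycleOf x), cycWt x C = ∑ i ∈ A, x.wt i := by
    refine sum_image' _ fun c hc => congrArg _ ?_
    ext j
    simp only [mem_filter, cycleOf_eq_cycleOf_iff, mem_cycleOf]
    exact ⟨fun hj => ⟨hA c j hj hc, hj.symm⟩, fun hj => hj.2.symm⟩
  obtain ⟨C, hC, hne⟩ := exists_ne_zero_of_sum_ne_zero (hsum ▸ h)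
  obtain ⟨c, hc, rfl⟩ := mem_image.1 hC
  exact ⟨_, cycleOf_mem_cycles x c, fun j hj => hA c j (mem_cycleOf.1 hj) hc, hne⟩

theorem mem_piPart {u w : GW m n} {C D : Finset (Fin n)} :
    D ∈ piPart u w C ↔ D ∈ cycles w ∧ piRel u w C D := by
  simp [piPart]

theorem orbitSetoid_of_piRel_cycleOf {u w : GW m n} {i j : Fin n}
    (h : piRel u w (cycleOf w i) (cycleOf w j)) : orbitSetoid u.perm w.perm i j := by
  set O := orbitSetoid u.perm w.perm
  let orbitsMeeting : Finset (Fin n) → Set (Fin n) := fun C => {k | ∃ i ∈ C, O i k}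
  have horbitsMeeting : ∀ C ∈ cycles w, ∀ x ∈ C, orbitsMeeting C = {k | O x k} := by
    intro C hC x hx
    rw [eq_cycleOf_of_mem hC hx]
    ext k
    simp only [orbitsMeeting, mem_cycleOf]
    exact ⟨fun ⟨i, hxi, hik⟩ => O.trans' ((le_sup_right : _ ≤ O) hxi) hik,
      fun hxk => ⟨x, SameCycle.refl _ _, hxk⟩⟩
  have hle : Relation.EqvGen.setoid (piRelBase u w) ≤ Setoid.ker orbitsMeeting := by
    refine Setoid.eqvGen_le fun C₁ C₂ ⟨hC₁, hC₂, D, hD, ⟨x, hx⟩, ⟨y, hy⟩⟩ => ?_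
    rw [mem_inter] at hx hy
    have hxy : O x y := (le_sup_left : _ ≤ O) <|
      mem_cycleOf.1 ((eq_cycleOf_of_mem hD hx.1) ▸ hy.1)
    rw [Setoid.ker_def, horbitsMeeting C₁ hC₁ x hx.2, horbitsMeeting C₂ hC₂ y hy.2]
    ext k
    exact ⟨O.trans' (O.symm' hxy), O.trans' hxy⟩
  have hij := Setoid.ker_def.1 (hle h)
  rw [horbitsMeeting _ (cycleOf_mem_cycles w i) i (mem_cycleOf_self w i),
    horbitsMeeting _ (cycleOf_mem_cycles w j) j (mem_cycleOf_self w j)] at hij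
  exact (Set.ext_iff.1 hij j).2 (O.refl' j)

theorem piRel_cycleOf_of_orbitSetoid {u w : GW m n} {i j : Fin n}
    (h : orbitSetoid u.perm w.perm i j) : piRel u w (cycleOf w i) (cycleOf w j) := by
  refine (show orbitSetoid u.perm w.perm ≤ (Relation.EqvGen.setoid (piRelBase u w)).comap
      (cycleOf w) from sup_le (sameCycle_setoid_le fun z => Relation.EqvGen.rel _ _ ?_)
        fun x y hxy => ?_) h
  · exact ⟨cycleOf_mem_cycles w z, cycleOf_mem_cycles w _, cycleOf u z, cycleOf_mem_cycles u z,
      ⟨z, mem_inter.2 ⟨mem_cycleOf_self u z, mem_cycleOf_self w z⟩⟩,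
      ⟨_, mem_inter.2 ⟨mem_cycleOf.2 (SameCycle.refl _ z).apply_right, mem_cycleOf_self w _⟩⟩⟩
  · rw [Setoid.comap_rel, cycleOf_eq_cycleOf_iff.2 hxy]

theorem piRel_cycleOf_iff {u w : GW m n} {i j : Fin n} :
    piRel u w (cycleOf w i) (cycleOf w j) ↔ orbitSetoid u.perm w.perm i j :=
  ⟨orbitSetoid_of_piRel_cycleOf, piRel_cycleOf_of_orbitSetoid⟩

theorem piPart_cycleOf_eq_iff {u w : GW m n} {i j : Fin n} :
    piPart u w (cycleOf w i) = piPart u w (cycleOf w j) ↔ orbitSetoid u.perm w.perm i j := by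
  rw [← piRel_cycleOf_iff]
  refine ⟨fun h => (mem_piPart.1 (h ▸ mem_piPart.2
    ⟨cycleOf_mem_cycles w j, Relation.EqvGen.refl _⟩)).2, fun h => ?_⟩
  ext D
  simp only [mem_piPart]
  exact and_congr_right fun _ =>
    ⟨(Relation.EqvGen.trans _ _ _ (Relation.EqvGen.symm _ _ h) ·),
      (Relation.EqvGen.trans _ _ _ h ·)⟩

theorem piPart_subset_cycles (u w : GW m n) (C : Finset (Fin n)) : piPart u w C ⊆ cycles w := by
  classical
  exact filter_subset _ _

theorem piParts_eq_image (u w : GW m n) :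
    piParts u w = univ.image fun i => piPart u w (cycleOf w i) := by
  rw [piParts, cycles, image_image]
  rfl

theorem card_piParts (u w : GW m n) : #(piParts u w) = orbitCount u.perm w.perm := by
  rw [piParts_eq_image, orbitCount]
  exact (Setoid.card_quotient_eq_card_image (Setoid.ext fun _ _ => piPart_cycleOf_eq_iff)).symm

theorem mem_supp_piPart_cycleOf {u w : GW m n} {i j : Fin n} :
    j ∈ supp (piPart u w (cycleOf w i)) ↔ orbitSetoid u.perm w.perm i j := by
  rw [← piRel_cycleOf_iff, supp, mem_sup]
  constructor
  · rintro ⟨C, hC, hj⟩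
    obtain ⟨hCw, hrel⟩ := mem_piPart.1 hC
    exact eq_cycleOf_of_mem hCw hj ▸ hrel
  · exact fun h => ⟨cycleOf w j, mem_piPart.2 ⟨cycleOf_mem_cycles w j, h⟩, mem_cycleOf_self w j⟩

theorem eq_piPart_of_mem_supp {u w : GW m n} {B : Finset (Finset (Fin n))}
    (hB : B ∈ piParts u w) {j : Fin n} (hj : j ∈ supp B) : B = piPart u w (cycleOf w j) := by
  rw [piParts_eq_image] at hB
  obtain ⟨i, -, rfl⟩ := mem_image.1 hB
  exact piPart_cycleOf_eq_iff.2 (mem_supp_piPart_cycleOf.1 hj)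

theorem partWt_eq_sum_supp (w : GW m n) {B : Finset (Finset (Fin n))} (hB : B ⊆ cycles w) :
    partWt w B = ∑ i ∈ supp B, w.wt i := by
  rw [supp, sup_eq_biUnion, sum_biUnion ((pairwiseDisjoint_cycles w).subset hB)]
  rfl

theorem mem_supp_piPart_of_sameCycle {u w : GW m n} {σ : Perm (Fin n)}
    (hσ : SameCycle.setoid σ ≤ orbitSetoid u.perm w.perm) {i j k : Fin n} (hjk : σ.SameCycle j k)
    (hj : j ∈ supp (piPart u w (cycleOf w i))) : k ∈ supp (piPart u w (cycleOf w i)) :=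
  mem_supp_piPart_cycleOf.2 (Setoid.trans' _ (mem_supp_piPart_cycleOf.1 hj) (hσ hjk))

theorem exists_cycle_subset_supp_of_partWt_ne_zero {u w : GW m n} {i : Fin n}
    (hwt : partWt w (piPart u w (cycleOf w i)) ≠ 0) :
    ∃ C ∈ {C ∈ cycles u | cycWt u C ≠ 0} ∪ {C ∈ cycles (u⁻¹ * w) | cycWt (u⁻¹ * w) C ≠ 0},
      C ⊆ supp (piPart u w (cycleOf w i)) := by
  set A := supp (piPart u w (cycleOf w i))
  have hu : SameCycle.setoid u.perm ≤ orbitSetoid u.perm w.perm := le_sup_left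
  have hv : SameCycle.setoid (u⁻¹ * w).perm ≤ orbitSetoid u.perm w.perm :=
    orbitSetoid_inv_mul u.perm w.perm ▸ le_sup_right
  have hsplit : ∑ j ∈ A, w.wt j = ∑ j ∈ A, u.wt j + ∑ j ∈ A, (u⁻¹ * w).wt j := by
    refine (congrArg (∑ j ∈ A, GW.wt · j) (mul_inv_cancel_left u w)).symm.trans
      (sum_wt_mul u _ fun j => ⟨?_, ?_⟩)
    · exact mem_supp_piPart_of_sameCycle hu (SameCycle.refl _ j).apply_right.symm
    · exact mem_supp_piPart_of_sameCycle hu (SameCycle.refl _ j).apply_right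
  rw [partWt_eq_sum_supp w (piPart_subset_cycles u w _), hsplit] at hwt
  by_cases hzero : ∑ j ∈ A, u.wt j = 0
  · rw [hzero, zero_add] at hwt
    obtain ⟨C, hC, hCA, hCwt⟩ :=
      exists_cycle_subset_cycWt_ne_zero _ (fun _ _ => mem_supp_piPart_of_sameCycle hv) hwt
    exact ⟨C, mem_union_right _ (mem_filter.2 ⟨hC, hCwt⟩), hCA⟩
  · obtain ⟨C, hC, hCA, hCwt⟩ :=
      exists_cycle_subset_cycWt_ne_zero _ (fun _ _ => mem_supp_piPart_of_sameCycle hu) hzero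
    exact ⟨C, mem_union_left _ (mem_filter.2 ⟨hC, hCwt⟩), hCA⟩

theorem piPartsNonzeroWt_le (u w : GW m n) :
    piPartsNonzeroWt u w ≤
      #{C ∈ cycles u | cycWt u C ≠ 0} + #{C ∈ cycles (u⁻¹ * w) | cycWt (u⁻¹ * w) C ≠ 0} := by
  refine (card_le_card_of_forall_subsingleton (fun B C => C ⊆ supp B) ?_ ?_).trans
    (card_union_le _ _)
  · intro B hB
    obtain ⟨hBparts, hwt⟩ := mem_filter.1 hB
    rw [piParts_eq_image] at hBparts
    obtain ⟨i, -, rfl⟩ := mem_image.1 hBparts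
    exact exists_cycle_subset_supp_of_partWt_ne_zero hwt
  · intro C hC B₁ hB₁ B₂ hB₂
    obtain ⟨j, hj⟩ : C.Nonempty := by
      rcases mem_union.1 hC with hC | hC <;> exact nonempty_of_mem_cycles (mem_filter.1 hC).1
    exact (eq_piPart_of_mem_supp (mem_filter.1 hB₁.1).1 (hB₁.2 hj)).trans
      (eq_piPart_of_mem_supp (mem_filter.1 hB₂.1).1 (hB₂.2 hj)).symm

end GW

theorem stmt7_general (m n : ℕ) (u w : GW m n) :
    (GW.codimfix u : ℤ) + (GW.codimfix (u⁻¹ * w) : ℤ) ≥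
      (n : ℤ) + (GW.numCycles w : ℤ) - 2 * ((GW.piParts u w).card : ℤ) +
        (GW.piPartsNonzeroWt u w : ℤ) := by
  have heuler := Perm.cycleCount_add_cycleCount_add_cycleCount_mul_le u.perm (u⁻¹ * w).perm
  have horbit : Perm.orbitCount u.perm (u⁻¹ * w).perm = (GW.piParts u w).card :=
    (Perm.orbitCount_inv_mul u.perm w.perm).trans (GW.card_piParts u w).symm
  rw [show u.perm * (u⁻¹ * w).perm = w.perm by simp, horbit, Nat.card_eq_fintype_card,
    Fintype.card_fin] at heuler
  simp only [← GW.numCycles_eq_cycleCount] at heuler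
  have hnonzero := GW.piPartsNonzeroWt_le u w
  have hu := GW.c0_add_card_filter_cycWt_ne_zero u
  have hv := GW.c0_add_card_filter_cycWt_ne_zero (u⁻¹ * w)
  have hu_le := GW.numCycles_le u
  have hv_le := GW.numCycles_le (u⁻¹ * w)
  unfold GW.codimfix
  omega

/-- For any two elements `u, w ∈ G(m,p,n)`,
`codimfix(u) + codimfix(u⁻¹w) ≥ n + c(w) − 2|Π_u(w)| + #{parts of Π_u(w) of nonzero weight}`. -/
theorem stmt7 (m p n : ℕ) (hm : 0 < m) (hp : 0 < p) (hn : 0 < n) (hpm : p ∣ m)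
    (u w : GW m n) (hu : GW.Gmem p hpm u) (hw : GW.Gmem p hpm w) :
    (GW.codimfix u : ℤ) + (GW.codimfix (u⁻¹ * w) : ℤ) ≥
      (n : ℤ) + (GW.numCycles w : ℤ) - 2 * ((GW.piParts u w).card : ℤ) +
        (GW.piPartsNonzeroWt u w : ℤ) :=
  stmt7_general m n u w
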